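/- arXiv:2109.12930 — 2 statements merged into one kernel-verified Lean document; each statement's English description precedes it below -/
import Mathlib

section
/- Let G be a simple graph on a finite vertex set V, w : V → ℕ, fix a vertex i, and for r ∈ ℕ let bc(r) := Σ_{v : dist_G(i,v) ≤ r} w(v). Let s ∈ ℕ, suppose k is the least natural number such that (k+1)·bc(k) ≥ s, and bc(k) > 0. Then for every integer T ≥ 1 with Σ_{t=1}^{T} bc(t−1) ≥ s, it holds that 3·T·bc(k) ≥ k·bc(k) + s, i.e., 3T ≥ k + s/bc(k) = Z_s(i). (Combinatorial core of Theorem: any algorithm solving cW_i in a fat-links CWC system requires Ω(Z_s(i)) rounds.) -/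
open Finset

/-- Combinatorial core of the `Ω(Z_s(i))` lower bound for `cW_i`:
if `k` is the least natural with `(k+1)·bc(k) ≥ s` and `bc(k) > 0`, then any
number of rounds `T ≥ 1` with `Σ_{t=1}^{T} bc(t−1) ≥ s` satisfies
`3·T·bc(k) ≥ k·bc(k) + s`, i.e. `3T ≥ k + s/bc(k)`. -/
theorem cW_timespan_lower_bound {V : Type*} [Fintype V] [DecidableEq V]
    (G : SimpleGraph V) [DecidableRel G.Reachable] (w : V → ℕ) (i : V)
    (bc : ℕ → ℕ)
    (hbc : ∀ r : ℕ, bc r =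
      ∑ v ∈ Finset.univ.filter (fun v => G.Reachable i v ∧ G.dist i v ≤ r), w v)
    (s k : ℕ)
    (hk : s ≤ (k + 1) * bc k)
    (hmin : ∀ j : ℕ, s ≤ (j + 1) * bc j → k ≤ j)
    (hpos : 0 < bc k)
    (T : ℕ) (hT : 1 ≤ T)
    (hsum : s ≤ ∑ t ∈ Finset.Icc 1 T, bc (t - 1)) :
    k * bc k + s ≤ 3 * T * bc k ∧
      (k : ℝ) + (s : ℝ) / (bc k : ℝ) ≤ 3 * (T : ℝ) := by
  have mono : ∀ a b : ℕ, a ≤ b → bc a ≤ bc b := by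
    intro a b hab
    rw [hbc a, hbc b]
    apply Finset.sum_le_sum_of_subset
    intro v hv
    simp only [Finset.mem_filter, Finset.mem_univ, true_and] at hv ⊢
    exact ⟨hv.1, hv.2.trans hab⟩
  have hbound : s ≤ T * bc (T - 1) := by
    calc s ≤ ∑ t ∈ Finset.Icc 1 T, bc (t - 1) := hsum
    _ ≤ ∑ _t ∈ Finset.Icc 1 T, bc (T - 1) := by
        apply Finset.sum_le_sum
        intro t ht
        exact mono _ _ (Nat.sub_le_sub_right (Finset.mem_Icc.mp ht).2 1)
    _ = T * bc (T - 1) := by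
        rw [Finset.sum_const, Nat.card_Icc]
        simp [Nat.mul_comm]
  have hkT : k + 1 ≤ T := by
    have := hmin (T - 1) (by rwa [Nat.sub_add_cancel hT])
    omega
  have h1 : k * bc k + s ≤ 3 * T * bc k := by nlinarith
  refine ⟨h1, ?_⟩
  have hb : (0 : ℝ) < (bc k : ℝ) := by exact_mod_cast hpos
  have h2 : (k : ℝ) * (bc k : ℝ) + (s : ℝ) ≤ 3 * (T : ℝ) * (bc k : ℝ) := by
    exact_mod_cast h1
  have h3 : (s : ℝ) / (bc k : ℝ) * (bc k : ℝ) = (s : ℝ) :=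
    div_mul_cancel₀ _ hb.ne'
  nlinarith
end

section
/- (Awerbuch–Peleg sparse covers, existence version.) Let G be a simple graph on a finite vertex set V, let 𝒞 be a finite cover of G (a finite family of clusters, i.e., vertex subsets each inducing a connected subgraph, whose union is V), and let κ ≥ 1 be an integer. Then there exists a cover 𝒞′ of G such that: (i) for every cluster B ∈ 𝒞 there is a cluster B′ ∈ 𝒞′ with B ⊆ B′; (ii) max_{B′ ∈ 𝒞′} Diam(B′) ≤ 4κ · max_{B ∈ 𝒞} Diam(B); and (iii) every vertex of V belongs to at most 2κ·|𝒞|^{1/κ} clusters of 𝒞′. -/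
/-!
Awerbuch–Peleg kernel growing. Starting from a cluster `S`, repeatedly replace the current family
`𝒴` by all clusters touching `⋃ 𝒴`; each step adds at most `2D` to the strong diameter of the
union, and with `n` clusters and `σ = n ^ (1/κ)` the family cannot grow by a factor `> σ` at
each of `κ + 1` consecutive steps. The first family that does not grow is a kernel: its union is an output
cluster, and the clusters touching it are set aside for the rest of the phase, so the kernels of
a phase are disjoint while covering at least `n / σ` clusters. Repeating phases on the clusters
not yet covered gives load at most `κ n ^ (1/κ)` and diameter at most `(2κ + 1) D ≤ 4κ D`.
-/

open Finset

lemma pow_le_of_mul_lt_succ {σ : ℝ} (hσ : 0 ≤ σ) {a : ℕ → ℝ} (h0 : 1 ≤ a 0) :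
    ∀ {j : ℕ}, (∀ i < j, σ * a i < a (i + 1)) → σ ^ j ≤ a j
  | 0, _ => by simpa using h0
  | j + 1, h => calc
      σ ^ (j + 1) = σ * σ ^ j := pow_succ' σ j
      _ ≤ σ * a j := by gcongr; exact pow_le_of_mul_lt_succ hσ h0 fun i hi => h i (by omega)
      _ ≤ a (j + 1) := (h j j.lt_succ_self).le

/-- Bernoulli's inequality, rescaled. -/
lemma pow_sub_pow_div_le_sub_inv_pow {κ : ℕ} (hκ : 0 < κ) {σ : ℝ} (hσ : 1 / κ ≤ σ) :
    σ ^ κ - σ ^ κ / σ ≤ (σ - 1 / κ) ^ κ := by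
  have hκ' : (0 : ℝ) < κ := by exact_mod_cast hκ
  have hσ0 : 0 < σ := (by positivity : (0 : ℝ) < 1 / κ).trans_le hσ
  have hbern := one_add_mul_le_pow (a := -1 / (κ * σ)) ?_ κ
  · calc σ ^ κ - σ ^ κ / σ = σ ^ κ * (1 + κ * (-1 / (κ * σ))) := by field_simp; ring
      _ ≤ σ ^ κ * (1 + -1 / (κ * σ)) ^ κ := by gcongr
      _ = (σ - 1 / κ) ^ κ := by rw [← mul_pow]; congr 1; field_simp; ring
  · have : 1 / (κ * σ) ≤ 1 := by
      rw [div_le_iff₀ hκ'] at hσ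
      rw [div_le_one (by positivity)]
      linarith
    rw [neg_div]
    linarith

lemma one_add_mul_rpow_sub_le {κ : ℕ} (hκ : 0 < κ) {σ k : ℝ} (hσ : 1 ≤ σ) (hkσ : k ≤ σ ^ κ)
    (hk : σ ^ κ ≤ σ * k) : 1 + κ * (σ ^ κ - k) ^ ((1 : ℝ) / κ) ≤ κ * σ := by
  have hκ' : (0 : ℝ) < κ := by exact_mod_cast hκ
  have hσκ : 1 / (κ : ℝ) ≤ σ := le_trans (by rw [div_le_one hκ']; exact_mod_cast hκ) hσ
  have hleft : σ ^ κ - k ≤ (σ - 1 / κ) ^ κ := calc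
    σ ^ κ - k ≤ σ ^ κ - σ ^ κ / σ := by
      have := (div_le_iff₀ (by linarith : 0 < σ)).2 (hk.trans_eq (mul_comm _ _))
      linarith
    _ ≤ (σ - 1 / κ) ^ κ := pow_sub_pow_div_le_sub_inv_pow hκ hσκ
  have hroot : (σ ^ κ - k) ^ ((1 : ℝ) / κ) ≤ σ - 1 / κ := by
    rw [one_div] at hleft hσκ ⊢
    rw [Real.rpow_inv_le_iff_of_pos (by linarith) (by linarith) hκ', Real.rpow_natCast]
    exact hleft
  calc 1 + κ * (σ ^ κ - k) ^ ((1 : ℝ) / κ) ≤ 1 + κ * (σ - 1 / κ) := by gcongr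
    _ = κ * σ := by field_simp; ring

lemma Set.PairwiseDisjoint.card_filter_mem_le_one {α : Type*} [DecidableEq α]
    {𝒯 : Finset (Finset α)} (h : (𝒯 : Set (Finset α)).PairwiseDisjoint id) (v : α) :
    #(𝒯.filter fun B => v ∈ B) ≤ 1 :=
  card_le_one_iff.2 fun hA hB =>
    h.elim_finset (mem_filter.1 hA).1 (mem_filter.1 hB).1 v (mem_filter.1 hA).2 (mem_filter.1 hB).2

namespace SimpleGraph

variable {V W : Type*} {G : SimpleGraph V}

lemma Reachable.dist_map_le {G' : SimpleGraph W} (f : G →g G') {u v : V} (h : G.Reachable u v) :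
    G'.dist (f u) (f v) ≤ G.dist u v := by
  obtain ⟨p, hp⟩ := h.exists_walk_length_eq_dist
  exact (dist_le (p.map f)).trans_eq ((p.length_map f).trans hp)

lemma diam_le_of_forall_dist_le [Nonempty V] {d : ℕ} (h : ∀ u v, G.dist u v ≤ d) : G.diam ≤ d := by
  obtain ⟨u, v, huv⟩ := G.exists_dist_eq_diam
  exact huv ▸ h u v

def IsClusterOfDiamLE (G : SimpleGraph V) (d : ℕ) (s : Set V) : Prop :=
  (G.induce s).Connected ∧ ∀ u v : s, (G.induce s).dist u v ≤ d

lemma Connected.isClusterOfDiamLE_diam {s : Set V} [Finite s] (h : (G.induce s).Connected) :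
    G.IsClusterOfDiamLE (G.induce s).diam s :=
  have : Nonempty s := h.nonempty
  ⟨h, fun _ _ => dist_le_diam (connected_iff_ediam_ne_top.1 h)⟩

namespace IsClusterOfDiamLE

variable {c d d' : ℕ} {s t : Set V}

lemma mono (h : G.IsClusterOfDiamLE d s) (hd : d ≤ d') : G.IsClusterOfDiamLE d' s :=
  ⟨h.1, fun u v => (h.2 u v).trans hd⟩

lemma nonempty {B : Finset V} (h : G.IsClusterOfDiamLE d B) : B.Nonempty :=
  let ⟨⟨v, hv⟩⟩ := h.1.nonempty
  ⟨v, hv⟩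

lemma reachable_of_subset (h : G.IsClusterOfDiamLE d s) (hst : s ⊆ t) {u v : V} (hu : u ∈ s)
    (hv : v ∈ s) : (G.induce t).Reachable ⟨u, hst hu⟩ ⟨v, hst hv⟩ :=
  (h.1.preconnected ⟨u, hu⟩ ⟨v, hv⟩).map (G.induceHomOfLE hst).toHom

lemma dist_le_of_subset (h : G.IsClusterOfDiamLE d s) (hst : s ⊆ t) {u v : V} (hu : u ∈ s)
    (hv : v ∈ s) : (G.induce t).dist ⟨u, hst hu⟩ ⟨v, hst hv⟩ ≤ d :=
  ((h.1.preconnected ⟨u, hu⟩ ⟨v, hv⟩).dist_map_le (G.induceHomOfLE hst).toHom).trans (h.2 _ _)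

/-- Any two vertices of the union are joined through `K`, by a path of length `≤ D + c + D`. -/
lemma sup [DecidableEq V] {K : Finset V} {Z : Finset (Finset V)} {D : ℕ}
    (hK : G.IsClusterOfDiamLE c K) (hKZ : K ⊆ Z.sup id)
    (hZ : ∀ B ∈ Z, G.IsClusterOfDiamLE D B ∧ ¬Disjoint B K) :
    G.IsClusterOfDiamLE (c + 2 * D) ↑(Z.sup id) := by
  set Y := Z.sup id
  have hpatch : ∀ u ∈ Y, ∃ B ∈ Z, u ∈ B ∧ ∃ w ∈ K, w ∈ B ∧ (B : Set V) ⊆ Y := by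
    intro u hu
    obtain ⟨B, hB, huB⟩ := Finset.mem_sup.mp hu
    obtain ⟨w, hwB, hwK⟩ := Finset.not_disjoint_iff.mp (hZ B hB).2
    exact ⟨B, hB, huB, w, hwK, hwB, coe_subset.2 (Finset.le_sup (f := id) hB)⟩
  have hKY : (K : Set V) ⊆ Y := coe_subset.2 hKZ
  obtain ⟨⟨k, hk⟩⟩ := hK.1.nonempty
  have hconn : (G.induce (Y : Set V)).Connected := by
    rw [connected_iff_exists_forall_reachable]
    refine ⟨⟨k, hKY hk⟩, fun ⟨u, hu⟩ => ?_⟩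
    obtain ⟨B, hB, huB, w, hwK, hwB, hBY⟩ := hpatch u hu
    exact (hK.reachable_of_subset hKY hk hwK).trans
      ((hZ B hB).1.reachable_of_subset hBY hwB huB)
  refine ⟨hconn, fun ⟨u, hu⟩ ⟨v, hv⟩ => ?_⟩
  obtain ⟨Bu, hBu, huB, wu, hwuK, hwuB, hBuY⟩ := hpatch u hu
  obtain ⟨Bv, hBv, hvB, wv, hwvK, hwvB, hBvY⟩ := hpatch v hv
  let w₁ : (Y : Set V) := ⟨wu, hKY hwuK⟩
  let w₂ : (Y : Set V) := ⟨wv, hKY hwvK⟩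
  calc (G.induce Y).dist ⟨u, hu⟩ ⟨v, hv⟩
      ≤ (G.induce Y).dist ⟨u, hu⟩ w₁ + ((G.induce Y).dist w₁ w₂ + (G.induce Y).dist w₂ ⟨v, hv⟩) :=
        hconn.dist_triangle.trans (add_le_add_right hconn.dist_triangle _)
    _ ≤ D + (c + D) :=
        add_le_add ((hZ Bu hBu).1.dist_le_of_subset hBuY huB hwuB)
          (add_le_add (hK.dist_le_of_subset hKY hwuK hwvK)
            ((hZ Bv hBv).1.dist_le_of_subset hBvY hwvB hvB))
    _ = c + 2 * D := by ring

end IsClusterOfDiamLE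

end SimpleGraph

namespace SparseCover

variable {V : Type*} [DecidableEq V] {G : SimpleGraph V} {U 𝒴 : Finset (Finset V)} {D κ : ℕ}

def touching (U 𝒴 : Finset (Finset V)) : Finset (Finset V) :=
  U.filter fun B => ¬Disjoint B (𝒴.sup id)

lemma touching_subset : touching U 𝒴 ⊆ U := filter_subset _ _

lemma subset_touching (h𝒴U : 𝒴 ⊆ U) (hne : ∀ B ∈ 𝒴, B.Nonempty) : 𝒴 ⊆ touching U 𝒴 :=
  fun B hB => mem_filter.2 ⟨h𝒴U hB, fun hd =>
    (hne B hB).ne_empty (disjoint_self.1 (hd.mono_right (Finset.le_sup (f := id) hB)))⟩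

lemma disjoint_sup_sdiff_touching : Disjoint (𝒴.sup id) ((U \ touching U 𝒴).sup id) :=
  Finset.disjoint_sup_right.2 fun B hB => by
    obtain ⟨hBU, hBZ⟩ := mem_sdiff.1 hB
    simpa [touching, hBU, disjoint_comm] using hBZ

lemma iterate_touching (hU : ∀ B ∈ U, G.IsClusterOfDiamLE D B) {S : Finset V} (hS : S ∈ U)
    (j : ℕ) : (touching U)^[j] {S} ⊆ U ∧ S ∈ (touching U)^[j] {S} ∧
      G.IsClusterOfDiamLE ((2 * j + 1) * D) ↑(((touching U)^[j] {S}).sup id) := by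
  induction j with
  | zero => simpa using ⟨hS, hU S hS⟩
  | succ j ih =>
    obtain ⟨hsub, hmem, hclus⟩ := ih
    have hgrow := subset_touching hsub fun B hB => (hU B (hsub hB)).nonempty
    rw [Function.iterate_succ_apply']
    refine ⟨touching_subset, hgrow hmem, ?_⟩
    convert hclus.sup (sup_mono hgrow) fun B hB =>
      ⟨hU B (touching_subset hB), (mem_filter.1 hB).2⟩ using 1
    ring

/-- While the family grows by a factor `> σ` per step it has `≥ σ ^ j` members after `j` steps,
so `|U| ≤ σ ^ κ` forces a sparse step within `κ` steps. -/
lemma exists_sparse_kernel (hU : ∀ B ∈ U, G.IsClusterOfDiamLE D B) {σ : ℝ} (hσ : 1 ≤ σ)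
    (hUσ : (#U : ℝ) ≤ σ ^ κ) {S : Finset V} (hS : S ∈ U) :
    ∃ 𝒴 ⊆ U, S ∈ 𝒴 ∧ G.IsClusterOfDiamLE ((2 * κ + 1) * D) ↑(𝒴.sup id) ∧
      (#(touching U 𝒴) : ℝ) ≤ σ * #𝒴 := by
  let 𝒴 : ℕ → Finset (Finset V) := fun j => (touching U)^[j] {S}
  obtain ⟨j, hjκ, hsparse⟩ : ∃ j ≤ κ, (#(touching U (𝒴 j)) : ℝ) ≤ σ * #(𝒴 j) := by
    by_contra! hdense
    have hgrowth : σ ^ κ ≤ #(𝒴 κ) :=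
      pow_le_of_mul_lt_succ (a := fun j => (#(𝒴 j) : ℝ)) (by linarith) (by simp [𝒴]) fun i hi => by
        simpa only [𝒴, Function.iterate_succ_apply'] using hdense i hi.le
    have hlast : (#(touching U (𝒴 κ)) : ℝ) ≤ #U := by
      exact_mod_cast card_le_card touching_subset
    nlinarith [hdense κ le_rfl, pow_nonneg (by linarith : (0 : ℝ) ≤ σ) κ]
  obtain ⟨hsub, hmem, hclus⟩ := iterate_touching hU hS j
  exact ⟨𝒴 j, hsub, hmem, hclus.mono (by gcongr), hsparse⟩

/-- One phase: carve out sparse kernels one after another, each from the clusters that no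
earlier kernel touches. -/
lemma exists_disjoint_kernels (hU : ∀ B ∈ U, G.IsClusterOfDiamLE D B) {σ : ℝ} (hσ : 1 ≤ σ)
    (hUσ : (#U : ℝ) ≤ σ ^ κ) :
    ∃ 𝒯 K : Finset (Finset V), K ⊆ U ∧
      (∀ Y ∈ 𝒯, G.IsClusterOfDiamLE ((2 * κ + 1) * D) Y ∧ Y ⊆ U.sup id) ∧
      (𝒯 : Set (Finset V)).PairwiseDisjoint id ∧ (∀ B ∈ K, ∃ Y ∈ 𝒯, B ⊆ Y) ∧
      (#U : ℝ) ≤ σ * #K := by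
  induction U using Finset.strongInduction with
  | H U ih =>
  obtain rfl | ⟨S, hS⟩ := U.eq_empty_or_nonempty
  · exact ⟨∅, ∅, by simp⟩
  obtain ⟨𝒴, h𝒴U, hS𝒴, h𝒴, hsparse⟩ := exists_sparse_kernel hU hσ hUσ hS
  have h𝒴Z : 𝒴 ⊆ touching U 𝒴 := subset_touching h𝒴U fun B hB => (hU B (h𝒴U hB)).nonempty
  obtain ⟨𝒯, K, hKU, h𝒯, hdisj, hK, hcard⟩ :=
    ih (U \ touching U 𝒴) (sdiff_ssubset touching_subset ⟨S, h𝒴Z hS𝒴⟩)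
      (fun B hB => hU B (mem_sdiff.1 hB).1)
      ((Nat.cast_le.2 (card_le_card sdiff_subset)).trans hUσ)
  refine ⟨insert (𝒴.sup id) 𝒯, 𝒴 ∪ K, union_subset h𝒴U (hKU.trans sdiff_subset), ?_, ?_, ?_, ?_⟩
  · simp only [mem_insert, forall_eq_or_imp]
    exact ⟨⟨h𝒴, sup_mono h𝒴U⟩, fun Y hY =>
      ⟨(h𝒯 Y hY).1, (h𝒯 Y hY).2.trans (sup_mono sdiff_subset)⟩⟩
  · rw [coe_insert]
    exact hdisj.insert fun Y hY _ =>
      disjoint_sup_sdiff_touching.mono_right (h𝒯 Y hY).2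
  · simp only [mem_union]
    rintro B (hB | hB)
    · exact ⟨𝒴.sup id, mem_insert_self _ _, Finset.le_sup (f := id) hB⟩
    · obtain ⟨Y, hY, hBY⟩ := hK B hB
      exact ⟨Y, mem_insert_of_mem hY, hBY⟩
  · have hsplit : #U = #(U \ touching U 𝒴) + #(touching U 𝒴) :=
      (card_sdiff_add_card_eq_card touching_subset).symm
    have h𝒴K : Disjoint 𝒴 K :=
      disjoint_of_subset_right hKU (disjoint_sdiff.mono_left h𝒴Z)
    rw [hsplit, card_union_of_disjoint h𝒴K]
    push_cast
    linarith

/-- Phases are repeated on the clusters not yet covered. A phase on `n` clusters with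
`σ = n ^ (1/κ)` covers at least `n / σ` of them at load `1`, leaving at most
`(σ - 1/κ) ^ κ`, so by induction the load is at most `1 + κ (σ - 1/κ) = κ σ`. -/
lemma exists_sparse_cover (hκ : 0 < κ) {ℛ : Finset (Finset V)}
    (hℛ : ∀ B ∈ ℛ, G.IsClusterOfDiamLE D B) :
    ∃ 𝒞' : Finset (Finset V), (∀ Y ∈ 𝒞', G.IsClusterOfDiamLE ((2 * κ + 1) * D) Y) ∧
      (∀ B ∈ ℛ, ∃ Y ∈ 𝒞', B ⊆ Y) ∧
      ∀ v, (#(𝒞'.filter fun Y => v ∈ Y) : ℝ) ≤ κ * (#ℛ : ℝ) ^ ((1 : ℝ) / κ) := by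
  induction ℛ using Finset.strongInduction with
  | H ℛ ih =>
  obtain rfl | hne := ℛ.eq_empty_or_nonempty
  · refine ⟨∅, by simp, by simp, fun v => ?_⟩
    simp only [filter_empty, card_empty, Nat.cast_zero]
    positivity
  set σ := (#ℛ : ℝ) ^ ((1 : ℝ) / κ)
  have hσκ : σ ^ κ = #ℛ := by
    dsimp only [σ]
    rw [one_div]
    exact Real.rpow_inv_natCast_pow (by positivity) hκ.ne'
  have hσ : 1 ≤ σ := Real.one_le_rpow (by exact_mod_cast hne.card_pos) (by positivity)
  obtain ⟨𝒯, K, hKℛ, h𝒯, hdisj, hK, hcard⟩ := exists_disjoint_kernels hℛ hσ hσκ.ge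
  have hKne : K.Nonempty := by
    rw [← card_pos]
    have : (0 : ℝ) < #ℛ := by exact_mod_cast hne.card_pos
    exact_mod_cast pos_of_mul_pos_right (this.trans_le hcard) (by linarith)
  obtain ⟨𝒞'', h𝒞'', hcov, hload⟩ :=
    ih (ℛ \ K) (sdiff_ssubset hKℛ hKne) fun B hB => hℛ B (mem_sdiff.1 hB).1
  refine ⟨𝒯 ∪ 𝒞'', ?_, ?_, fun v => ?_⟩
  · simp only [mem_union]
    rintro Y (hY | hY)
    exacts [(h𝒯 Y hY).1, h𝒞'' Y hY]
  · intro B hB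
    by_cases hBK : B ∈ K
    · obtain ⟨Y, hY, hBY⟩ := hK B hBK
      exact ⟨Y, mem_union_left _ hY, hBY⟩
    · obtain ⟨Y, hY, hBY⟩ := hcov B (mem_sdiff.2 ⟨hB, hBK⟩)
      exact ⟨Y, mem_union_right _ hY, hBY⟩
  have hKℛ' : (#K : ℝ) ≤ #ℛ := by exact_mod_cast card_le_card hKℛ
  have hrest : (#(ℛ \ K) : ℝ) = σ ^ κ - #K := by
    rw [hσκ, card_sdiff_of_subset hKℛ, Nat.cast_sub (card_le_card hKℛ)]
  calc (#((𝒯 ∪ 𝒞'').filter fun Y => v ∈ Y) : ℝ)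
      ≤ #(𝒯.filter fun Y => v ∈ Y) + #(𝒞''.filter fun Y => v ∈ Y) := by
        rw [filter_union]; exact_mod_cast card_union_le _ _
    _ ≤ 1 + κ * (σ ^ κ - #K) ^ ((1 : ℝ) / κ) :=
        hrest ▸ add_le_add (by exact_mod_cast hdisj.card_filter_mem_le_one v) (hload v)
    _ ≤ κ * σ := one_add_mul_rpow_sub_le hκ hσ (hσκ ▸ hKℛ') (hσκ ▸ hcard)

end SparseCover

open SimpleGraph SparseCover

theorem sparse_cover_exists_general {V : Type*} [DecidableEq V]
    (G : SimpleGraph V) (𝒞 : Finset (Finset V)) (κ : ℕ) (hκ : 1 ≤ κ)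
    (hcover : ∀ v : V, ∃ B ∈ 𝒞, v ∈ B)
    (hconn : ∀ B ∈ 𝒞, (G.induce (B : Set V)).Connected) :
    ∃ 𝒞' : Finset (Finset V),
      (∀ v : V, ∃ B ∈ 𝒞', v ∈ B) ∧
      (∀ B ∈ 𝒞', (G.induce (B : Set V)).Connected) ∧
      (∀ B ∈ 𝒞, ∃ B' ∈ 𝒞', B ⊆ B') ∧
      (∀ D : ℕ,
        (∀ B ∈ 𝒞, ∀ u v : V, ∀ (hu : u ∈ B) (hv : v ∈ B),
          (G.induce (B : Set V)).dist ⟨u, Finset.mem_coe.mpr hu⟩ ⟨v, Finset.mem_coe.mpr hv⟩ ≤ D) →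
        ∀ B' ∈ 𝒞', ∀ u v : V, ∀ (hu : u ∈ B') (hv : v ∈ B'),
          (G.induce (B' : Set V)).dist ⟨u, Finset.mem_coe.mpr hu⟩ ⟨v, Finset.mem_coe.mpr hv⟩
            ≤ 4 * κ * D) ∧
      (∀ v : V, (((𝒞'.filter (fun B => v ∈ B)).card : ℝ)) ≤
        2 * (κ : ℝ) * (𝒞.card : ℝ) ^ ((1 : ℝ) / (κ : ℝ))) := by
  -- `𝒞'` may not depend on `D`, so it is built for the largest diameter `D₀` occurring in `𝒞`.
  set D₀ := 𝒞.sup fun B => (G.induce (B : Set V)).diam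
  obtain ⟨𝒞', h𝒞', hsub, hload⟩ := exists_sparse_cover hκ fun B hB =>
    (hconn B hB).isClusterOfDiamLE_diam.mono
      (Finset.le_sup (f := fun B : Finset V => (G.induce (B : Set V)).diam) hB)
  refine ⟨𝒞', fun v => ?_, fun B hB => (h𝒞' B hB).1, hsub, fun D hD B hB u v hu hv => ?_,
    fun v => ?_⟩
  · obtain ⟨B, hB, hvB⟩ := hcover v
    obtain ⟨B', hB', hBB'⟩ := hsub B hB
    exact ⟨B', hB', hBB' hvB⟩
  · have hD₀ : D₀ ≤ D := Finset.sup_le fun B hB =>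
      have := (hconn B hB).nonempty
      diam_le_of_forall_dist_le fun u v => hD B hB u v u.2 v.2
    calc _ ≤ (2 * κ + 1) * D₀ := (h𝒞' B hB).2 ⟨u, hu⟩ ⟨v, hv⟩
      _ ≤ 4 * κ * D := by gcongr; omega
  · calc _ ≤ (κ : ℝ) * (𝒞.card : ℝ) ^ ((1 : ℝ) / (κ : ℝ)) := hload v
      _ ≤ 2 * (κ : ℝ) * (𝒞.card : ℝ) ^ ((1 : ℝ) / (κ : ℝ)) := by
        gcongr; exact le_mul_of_one_le_left (by positivity) one_le_two

/-- Awerbuch–Peleg sparse covers (existence version). Given a cover `𝒞` of a finite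
graph `G` by clusters (connected vertex subsets) and an integer `κ ≥ 1`, there is a
cover `𝒞′` such that (i) every cluster of `𝒞` is contained in some cluster of `𝒞′`,
(ii) the strong diameter of every cluster of `𝒞′` is at most `4κ` times the maximum
strong diameter of clusters of `𝒞`, and (iii) every vertex belongs to at most
`2κ·|𝒞|^{1/κ}` clusters of `𝒞′`. -/
theorem sparse_cover_exists {V : Type*} [Fintype V] [DecidableEq V]
    (G : SimpleGraph V) (𝒞 : Finset (Finset V)) (κ : ℕ) (hκ : 1 ≤ κ)
    (hcover : ∀ v : V, ∃ B ∈ 𝒞, v ∈ B)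
    (hconn : ∀ B ∈ 𝒞, (G.induce (B : Set V)).Connected) :
    ∃ 𝒞' : Finset (Finset V),
      (∀ v : V, ∃ B ∈ 𝒞', v ∈ B) ∧
      (∀ B ∈ 𝒞', (G.induce (B : Set V)).Connected) ∧
      (∀ B ∈ 𝒞, ∃ B' ∈ 𝒞', B ⊆ B') ∧
      (∀ D : ℕ,
        (∀ B ∈ 𝒞, ∀ u v : V, ∀ (hu : u ∈ B) (hv : v ∈ B),
          (G.induce (B : Set V)).dist ⟨u, Finset.mem_coe.mpr hu⟩ ⟨v, Finset.mem_coe.mpr hv⟩ ≤ D) →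
        ∀ B' ∈ 𝒞', ∀ u v : V, ∀ (hu : u ∈ B') (hv : v ∈ B'),
          (G.induce (B' : Set V)).dist ⟨u, Finset.mem_coe.mpr hu⟩ ⟨v, Finset.mem_coe.mpr hv⟩
            ≤ 4 * κ * D) ∧
      (∀ v : V, (((𝒞'.filter (fun B => v ∈ B)).card : ℝ)) ≤
        2 * (κ : ℝ) * (𝒞.card : ℝ) ^ ((1 : ℝ) / (κ : ℝ))) :=
  sparse_cover_exists_general G 𝒞 κ hκ hcover hconn
end
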